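/- arXiv:2101.12645 — 2 statements merged into one kernel-verified Lean document; each statement's English description precedes it below -/
import Mathlib

section
/- Let M be a finite-dimensional real vector space equipped with an inner product ⟨·,·⟩ (induced norm ‖·‖) and with a symmetric positive definite bilinear form a. Let A : M → M be defined by ⟨A λ, μ⟩ = a(λ, μ) for all μ ∈ M, and let λ̄ denote the largest eigenvalue of A. Let Q : M → M be any map, and suppose there are constants C_B > 0, C₂ > 0 and h > 0 such that ‖λ − Q λ‖ ≤ C_B h² ‖A λ‖ for all λ ∈ M, and λ̄ ≤ C₂ h^{-2}. Then for all λ ∈ M, |a(λ − Q λ, λ)| ≤ C_B C₂ ‖A λ‖² / λ̄. -/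
open scoped RealInnerProductSpace

/-- Sufficient condition (B1) plus the spectral bound imply the
regularity-approximation assumption (A1). -/
theorem regularity_approximation_from_B1
    {M : Type*} [NormedAddCommGroup M] [InnerProductSpace ℝ M] [FiniteDimensional ℝ M]
    (a : M →ₗ[ℝ] M →ₗ[ℝ] ℝ)
    (ha_symm : ∀ x y : M, a x y = a y x)
    (ha_pos : ∀ x : M, x ≠ 0 → 0 < a x x)
    (A : M →ₗ[ℝ] M)
    (hA : ∀ x y : M, ⟪A x, y⟫ = a x y)
    (lam : ℝ)
    (hlam_eig : Module.End.HasEigenvalue A lam)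
    (hlam_max : ∀ μ : ℝ, Module.End.HasEigenvalue A μ → μ ≤ lam)
    (Q : M → M) (CB C₂ h : ℝ) (hCB : 0 < CB) (hC₂ : 0 < C₂) (hh : 0 < h)
    (hQ : ∀ x : M, ‖x - Q x‖ ≤ CB * h ^ 2 * ‖A x‖)
    (hlam_bound : lam ≤ C₂ / h ^ 2) :
    ∀ x : M, |a (x - Q x) x| ≤ CB * C₂ * ‖A x‖ ^ 2 / lam := by
  -- Step 1: lam > 0
  obtain ⟨v, hv⟩ := hlam_eig.exists_hasEigenvector
  have hv0 : v ≠ 0 := hv.right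
  have hAv : A v = lam • v := hv.apply_eq_smul
  have hvv : (0:ℝ) < ⟪v, v⟫ := by rw [real_inner_self_eq_norm_sq]; have := norm_pos_iff.mpr hv0; positivity
  have havv : (0:ℝ) < a v v := ha_pos v hv0
  have h1 : lam * ⟪v, v⟫ = a v v := by
    rw [← hA v v, hAv, real_inner_smul_left]
  have hlam_pos : 0 < lam := by nlinarith
  intro x
  have key : a (x - Q x) x = ⟪A x, x - Q x⟫ := by
    rw [hA, ha_symm]
  have hbound : |a (x - Q x) x| ≤ ‖A x‖ * (CB * h ^ 2 * ‖A x‖) := by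
    rw [key]
    calc |⟪A x, x - Q x⟫| ≤ ‖A x‖ * ‖x - Q x‖ := abs_real_inner_le_norm _ _
      _ ≤ ‖A x‖ * (CB * h ^ 2 * ‖A x‖) :=
        mul_le_mul_of_nonneg_left (hQ x) (norm_nonneg _)
  have hh2 : h ^ 2 ≤ C₂ / lam := by
    rw [le_div_iff₀ hlam_pos]
    rw [le_div_iff₀ (by positivity : (0:ℝ) < h ^ 2)] at hlam_bound
    linarith
  calc |a (x - Q x) x| ≤ ‖A x‖ * (CB * h ^ 2 * ‖A x‖) := hbound
    _ ≤ ‖A x‖ * (CB * (C₂ / lam) * ‖A x‖) := by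
        apply mul_le_mul_of_nonneg_left _ (norm_nonneg _)
        apply mul_le_mul_of_nonneg_right _ (norm_nonneg _)
        exact mul_le_mul_of_nonneg_left hh2 hCB.le
    _ = CB * C₂ * ‖A x‖ ^ 2 / lam := by ring
end

section
/- Let M and N be finite-dimensional real vector spaces equipped with symmetric positive definite bilinear forms a on M and a' on N (with induced norms ‖·‖_a and ‖·‖_{a'}). Let I : N → M be a linear map such that a(I μ, I μ) ≤ C² a'(μ, μ) for all μ ∈ N, where C > 0, and let P : M → N be the linear map defined by a'(P λ, μ) = a(λ, I μ) for all μ ∈ N. Then for all λ ∈ M, a(λ − I P λ, λ − I P λ) ≤ (1 + C² · max(C² − 2, 0)) a(λ, λ); in particular ‖λ − I P λ‖_a ≤ C' ‖λ‖_a with a constant C' depending only on C. -/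
lemma bilin_nonneg {M : Type*} [AddCommGroup M] [Module ℝ M]
    (a : M →ₗ[ℝ] M →ₗ[ℝ] ℝ) (ha_pos : ∀ x : M, x ≠ 0 → 0 < a x x)
    (x : M) : 0 ≤ a x x := by
  by_cases h : x = 0
  · simp [h]
  · exact (ha_pos x h).le

lemma bilin_cs {M : Type*} [AddCommGroup M] [Module ℝ M]
    (a : M →ₗ[ℝ] M →ₗ[ℝ] ℝ)
    (ha_symm : ∀ x y : M, a x y = a y x)
    (ha_pos : ∀ x : M, x ≠ 0 → 0 < a x x)
    (x y : M) : (a x y) ^ 2 ≤ a x x * a y y := by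
  have h : ∀ t : ℝ, 0 ≤ a y y * t ^ 2 + (2 * a x y) * t + a x x := by
    intro t
    have := bilin_nonneg a ha_pos (x + t • y)
    have hs : a (x + t • y) (x + t • y)
        = a y y * t ^ 2 + (2 * a x y) * t + a x x := by
      simp [map_add, map_smul, ha_symm y x]
      ring
    linarith [hs ▸ this]
  have hd := discrim_le_zero (a := a y y) (b := 2 * a x y) (c := a x x) (fun t => by simpa [sq] using h t)
  unfold discrim at hd
  nlinarith [hd]

/-- Verification of the stability assumption (A2): stability of
`λ ↦ λ - I (P λ)` in the energy norm, for the Ritz quasi-projection `P`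
defined by `a'(P λ, μ) = a(λ, I μ)` and a bounded injection operator `I`. -/
theorem stability_of_identity_minus_injection_ritz
    {M N : Type*} [AddCommGroup M] [Module ℝ M] [FiniteDimensional ℝ M]
    [AddCommGroup N] [Module ℝ N] [FiniteDimensional ℝ N]
    (a : M →ₗ[ℝ] M →ₗ[ℝ] ℝ) (a' : N →ₗ[ℝ] N →ₗ[ℝ] ℝ)
    (ha_symm : ∀ x y : M, a x y = a y x)
    (ha_pos : ∀ x : M, x ≠ 0 → 0 < a x x)
    (ha'_symm : ∀ x y : N, a' x y = a' y x)
    (ha'_pos : ∀ x : N, x ≠ 0 → 0 < a' x x)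
    (C : ℝ) (hC : 0 < C)
    (I : N →ₗ[ℝ] M)
    (hI : ∀ μ : N, a (I μ) (I μ) ≤ C ^ 2 * a' μ μ)
    (P : M →ₗ[ℝ] N)
    (hP : ∀ (x : M) (μ : N), a' (P x) μ = a x (I μ)) :
    ∀ x : M,
      a (x - I (P x)) (x - I (P x)) ≤ (1 + C ^ 2 * max (C ^ 2 - 2) 0) * a x x ∧
      Real.sqrt (a (x - I (P x)) (x - I (P x))) ≤
        Real.sqrt (1 + C ^ 2 * max (C ^ 2 - 2) 0) * Real.sqrt (a x x) := by
  intro x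
  set p := I (P x) with hp
  set s := a' (P x) (P x) with hs
  have hs_nonneg : 0 ≤ s := bilin_nonneg a' ha'_pos (P x)
  have hxx : 0 ≤ a x x := bilin_nonneg a ha_pos x
  have e1 : a x p = s := (hP x (P x)).symm
  have hpp : a p p ≤ C ^ 2 * s := hI (P x)
  have hpp0 : 0 ≤ a p p := bilin_nonneg a ha_pos p
  -- stability of P : s ≤ C^2 * a x x
  have hcs : s ^ 2 ≤ a x x * a p p := by
    rw [← e1]; exact bilin_cs a ha_symm ha_pos x p
  have hstab : s ≤ C ^ 2 * a x x := by
    rcases eq_or_lt_of_le hs_nonneg with h | h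
    · nlinarith
    · have : s ^ 2 ≤ a x x * (C ^ 2 * s) := le_trans hcs (by nlinarith)
      nlinarith
  have expand : a (x - p) (x - p) = a x x - 2 * s + a p p := by
    simp [map_sub, e1, ha_symm p x]
    ring
  have hmax : 0 ≤ max (C ^ 2 - 2) 0 := le_max_right _ _
  have key : a p p - 2 * s ≤ max (C ^ 2 - 2) 0 * (C ^ 2 * a x x) := by
    have h1 : a p p - 2 * s ≤ (C ^ 2 - 2) * s := by nlinarith
    have h2 : (C ^ 2 - 2) * s ≤ max (C ^ 2 - 2) 0 * s :=
      mul_le_mul_of_nonneg_right (le_max_left _ _) hs_nonneg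
    have h3 : max (C ^ 2 - 2) 0 * s ≤ max (C ^ 2 - 2) 0 * (C ^ 2 * a x x) :=
      mul_le_mul_of_nonneg_left hstab hmax
    linarith
  have main : a (x - p) (x - p) ≤ (1 + C ^ 2 * max (C ^ 2 - 2) 0) * a x x := by
    rw [expand]; nlinarith
  refine ⟨main, ?_⟩
  calc Real.sqrt (a (x - p) (x - p))
      ≤ Real.sqrt ((1 + C ^ 2 * max (C ^ 2 - 2) 0) * a x x) := Real.sqrt_le_sqrt main
    _ = Real.sqrt (1 + C ^ 2 * max (C ^ 2 - 2) 0) * Real.sqrt (a x x) :=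
        Real.sqrt_mul (by nlinarith) _
end
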